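/- In a null foliation adapted chart with g³³ ≠ 0, choose l = M (the vector field with M^r = g^{r3}g^{34} − g^{33}g^{r4}) and α = −(g³³)^{−1/2} dx³, so that κ = (g³³)^{−1/2}. Then M(ln|κ|) = dα(M, α♯); consequently the condition dM♭(n,M) + dα(M,α♯) + ds♭(M,s) = 0 (equivalently ∇_μ M^μ = 0) holds if and only if M(ln|κ|) + dM♭(n,M) + ds♭(M,s) = 0. -/

import Mathlib

noncomputable section

namespace FFE

/-- Points of the chart domain `U_p ⊆ M` of a spacetime, in coordinates
`(x¹,…,x⁴)` (indexed here by `0,…,3`, so `x³ ↦ 2` and `x⁴ ↦ 3`). -/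
abbrev Pt : Type := Fin 4 → ℝ

/-- Scalar fields. -/
abbrev Sc : Type := Pt → ℝ

/-- Vector fields, given by their chart components. -/
abbrev Vec : Type := Fin 4 → Sc

/-- Covector fields (1-forms), given by their chart components. -/
abbrev Cov : Type := Fin 4 → Sc

/-- 2-forms, given by their (antisymmetric) chart components. -/
abbrev Form2 : Type := Fin 4 → Fin 4 → Sc

/-- Partial derivative along the `i`-th coordinate. -/
def pd (i : Fin 4) (f : Sc) : Sc := fun p => fderiv ℝ f p (Pi.single i 1)

/-- Smoothness of a scalar field. -/
def Smooth (f : Sc) : Prop := ContDiff ℝ (⊤ : ℕ∞) f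

/-- Directional derivative of a scalar field along a vector field. -/
def act (v : Vec) (f : Sc) : Sc := ∑ i, v i * pd i f

/-- Lie bracket of vector fields. -/
def bracket (v w : Vec) : Vec := fun μ => act v (w μ) - act w (v μ)

/-- Exterior derivative of a 1-form, evaluated on two vector fields:
`dω(v,w) = (∂_μ ω_ν − ∂_ν ω_μ) v^μ w^ν`. -/
def dOne (ω : Cov) (v w : Vec) : Sc :=
  ∑ μ, ∑ ν, (pd μ (ω ν) - pd ν (ω μ)) * v μ * w ν

/-- `log |f|`. -/
def logabs (f : Sc) : Sc := fun p => Real.log |f p|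

/-- A (smooth) Lorentzian metric of signature `(-1,1,1,1)`, given in a chart by its
covariant components `gdown`, contravariant components `ginv`, and volume factor
`vol = √(−det g)`. -/
structure Lorentzian where
  gdown : Fin 4 → Fin 4 → Sc
  ginv : Fin 4 → Fin 4 → Sc
  vol : Sc
  smooth_gdown : ∀ μ ν, Smooth (gdown μ ν)
  smooth_ginv : ∀ μ ν, Smooth (ginv μ ν)
  smooth_vol : Smooth vol
  symm_gdown : ∀ μ ν, gdown μ ν = gdown ν μ
  symm_ginv : ∀ μ ν, ginv μ ν = ginv ν μ
  inv_gdown : ∀ μ ν p, (∑ ρ, ginv μ ρ p * gdown ρ ν p) = if μ = ν then 1 else 0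
  vol_pos : ∀ p, 0 < vol p
  vol_sq : ∀ p, vol p ^ 2 = -Matrix.det (Matrix.of fun μ ν => gdown μ ν p)
  signature : ∀ p, ∃ e : Fin 4 → Fin 4 → ℝ, ∀ i j,
    (∑ μ, ∑ ν, gdown μ ν p * e i μ * e j ν) =
      if i = j then (if i = 0 then -1 else 1) else 0

namespace Lorentzian

variable (g : Lorentzian)

/-- Lowering an index: `v ↦ v♭`. -/
def flat (v : Vec) : Cov := fun μ => ∑ ν, g.gdown μ ν * v ν

/-- Raising an index: `ω ↦ ω♯`. -/
def sharp (ω : Cov) : Vec := fun μ => ∑ ν, g.ginv μ ν * ω ν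

/-- Metric pairing `g(v,w)` of vector fields. -/
def inner (v w : Vec) : Sc := ∑ μ, ∑ ν, g.gdown μ ν * v μ * w ν

/-- Christoffel symbols of the Levi-Civita connection. -/
def christoffel (μ ν ρ : Fin 4) : Sc := fun p =>
  (1 / 2) * ∑ σ, g.ginv μ σ p *
    (pd ν (g.gdown σ ρ) p + pd ρ (g.gdown σ ν) p - pd σ (g.gdown ν ρ) p)

/-- Covariant derivative `∇_v w` of the Levi-Civita connection. -/
def nabla (v w : Vec) : Vec := fun μ =>
  (∑ ν, v ν * pd ν (w μ)) + ∑ ν, ∑ ρ, g.christoffel μ ν ρ * v ν * w ρ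

/-- Divergence `∇_μ X^μ = (1/√(−g)) ∂_μ (√(−g) X^μ)`. -/
def div (v : Vec) : Sc := fun p =>
  (g.vol p)⁻¹ * ∑ μ, pd μ (fun q => g.vol q * v μ q) p

/-- Raising both indices of a 2-form. -/
def up2 (F : Form2) : Form2 := fun μ ν => ∑ ρ, ∑ σ, g.ginv μ ρ * g.ginv ν σ * F ρ σ

/-- The full contraction `F_{μν} F^{μν}`. -/
def contract2 (F : Form2) : Sc := ∑ μ, ∑ ν, F μ ν * g.up2 F μ ν

/-- The current density vector `j = *(d*F)`, in components
`j^μ = (1/√(−g)) ∂_ν (√(−g) F^{μν})`. -/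
def current (F : Form2) : Vec := fun μ => fun p =>
  (g.vol p)⁻¹ * ∑ ν, pd ν (fun q => g.vol q * g.up2 F μ ν q) p

/-- `F` is a null 2-form: `F_{μν}F^{μν} = 0`. -/
def IsNull (F : Form2) : Prop := g.contract2 F = 0

/-- The force-free condition `i_{j♯} F = 0` for the current `j` of `F`. -/
def ForceFree (F : Form2) : Prop := ∀ ν, (∑ μ, F μ ν * g.current F μ) = 0

end Lorentzian

/-- `dF = 0` for a 2-form. -/
def Closed (F : Form2) : Prop :=
  ∀ μ ν ρ, pd μ (F ν ρ) + pd ν (F ρ μ) + pd ρ (F μ ν) = 0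

/-- The Levi-Civita alternating symbol. -/
def eps (μ ν ρ σ : Fin 4) : ℝ :=
  Matrix.det (Matrix.of fun i j => if (![μ, ν, ρ, σ] i) = j then (1 : ℝ) else 0)

/-- Hodge star of a 2-form: `(*F)_{μν} = ½ √(−g) ε_{μνρσ} F^{ρσ}`. -/
def Lorentzian.hodge2 (g : Lorentzian) (F : Form2) : Form2 := fun μ ν => fun p =>
  (1 / 2) * g.vol p * ∑ ρ, ∑ σ, eps μ ν ρ σ * g.up2 F ρ σ p

/-- Exterior derivative of a 2-form (components of the 3-form `dG`). -/
def dTwo (G : Form2) : Fin 4 → Fin 4 → Fin 4 → Sc := fun μ ν ρ =>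
  pd μ (G ν ρ) + pd ν (G ρ μ) + pd ρ (G μ ν)

/-- The (scalar density representing the) wedge product of a 3-form with a 1-form. -/
def wedge31 (J : Fin 4 → Fin 4 → Fin 4 → Sc) (ω : Cov) : Sc := fun p =>
  ∑ μ, ∑ ν, ∑ ρ, ∑ σ, eps μ ν ρ σ * J μ ν ρ p * ω σ p

/-- The chart is adapted to a *null* foliation: on the leaves (the level sets of
`(x³,x⁴)`) the metric is degenerate, i.e. `g³³g⁴⁴ − (g³⁴)² = 0`. -/
def Lorentzian.NullAdapted (g : Lorentzian) : Prop :=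
  ∀ p, g.ginv 2 2 p * g.ginv 3 3 p - (g.ginv 2 3 p) ^ 2 = 0

/-- `M^r = g^{r3} g^{34} − g^{33} g^{r4}` (coordinates `x³,x⁴` are indices `2,3`). -/
def Mvec (g : Lorentzian) : Vec := fun r =>
  g.ginv r 2 * g.ginv 2 3 - g.ginv 2 2 * g.ginv r 3

/-- `N^r = g^{r3} g^{44} − g^{34} g^{r4}`. -/
def Nvec (g : Lorentzian) : Vec := fun r =>
  g.ginv r 2 * g.ginv 3 3 - g.ginv 2 3 * g.ginv r 3

/-- A null foliation adapted frame `(s, l, α♯, n)`: `l, n` null, `s, α♯` unit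
spacelike, `g(n,l) = −1`, all other frame inner products zero, spanning `TM`. -/
structure Frame (g : Lorentzian) (s l a n : Vec) : Prop where
  smooth_s : ∀ μ, Smooth (s μ)
  smooth_l : ∀ μ, Smooth (l μ)
  smooth_a : ∀ μ, Smooth (a μ)
  smooth_n : ∀ μ, Smooth (n μ)
  l_null : g.inner l l = 0
  n_null : g.inner n n = 0
  s_unit : g.inner s s = 1
  a_unit : g.inner a a = 1
  n_l : g.inner n l = -1
  n_s : g.inner n s = 0
  n_a : g.inner n a = 0
  l_s : g.inner l s = 0
  l_a : g.inner l a = 0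
  s_a : g.inner s a = 0
  spans : ∀ (p : Pt) (v : Fin 4 → ℝ), ∃ c : Fin 4 → ℝ,
    ∀ μ, v μ = c 0 * s μ p + c 1 * l μ p + c 2 * a μ p + c 3 * n μ p

/-- `l` is a pregeodesic vector field: `∇_l l` is everywhere proportional to `l`. -/
def Pregeodesic (g : Lorentzian) (l : Vec) : Prop :=
  ∃ f : Sc, g.nabla l l = fun μ => f * l μ

/-- The null expansion scalar `θ = ½[g(∇_s l, s) + g(∇_{α♯} l, α♯)]`. -/
def theta (g : Lorentzian) (l s a : Vec) : Sc :=
  (1 / 2 : Sc) * (g.inner (g.nabla s l) s + g.inner (g.nabla a l) a)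

/-- The foliation admits an equipartition of null mean curvature w.r.t. `l`:
`θ = g(∇_s l, s)`. -/
def Equipartition (g : Lorentzian) (l s a : Vec) : Prop :=
  theta g l s a = g.inner (g.nabla s l) s

/-- `l` admits a uniform equipartition of null mean curvature:
`g(∇_s l, α♯) + g(∇_{α♯} l, s) = 0`. -/
def UniformEquipartition (g : Lorentzian) (l s a : Vec) : Prop :=
  g.inner (g.nabla s l) a + g.inner (g.nabla a l) s = 0

/-- `v` lies in the kernel of the 2-form `F`. -/
def InKernel (F : Form2) (v : Vec) : Prop := ∀ μ, (∑ ν, F μ ν * v ν) = 0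

/-- The kernel of `F` consists at each point exactly of the vectors tangent to the
leaves of the adapted chart (those with vanishing `x³`- and `x⁴`-components). -/
def KernelExact (F : Form2) : Prop :=
  ∀ (p : Pt) (v : Fin 4 → ℝ),
    (∀ μ, (∑ ν, F μ ν p * v ν) = 0) ↔ (v 2 = 0 ∧ v 3 = 0)

/-- The kernel of `F` is at each point exactly the span of `v` and `w`. -/
def KernelSpan (F : Form2) (v w : Vec) : Prop :=
  ∀ (p : Pt) (x : Fin 4 → ℝ),
    (∀ μ, (∑ ν, F μ ν p * x ν) = 0) ↔ ∃ c d : ℝ, ∀ μ, x μ = c * v μ p + d * w μ p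

/-- `u` is a function of `(x³,x⁴)` alone (constant along the leaves). -/
def LeafConstant (u : Sc) : Prop := pd 0 u = 0 ∧ pd 1 u = 0

/-- The 2-form `F = u dx³ ∧ dx⁴`. -/
def chartF (u : Sc) : Form2 := fun μ ν =>
  u * ((if μ = 2 ∧ ν = 3 then (1 : Sc) else 0) - if μ = 3 ∧ ν = 2 then (1 : Sc) else 0)

/-- The transition factor `κ = (α₃ l♭₄ − α₄ l♭₃)⁻¹`. -/
def kappa (g : Lorentzian) (a l : Vec) : Sc :=
  (g.flat a 2 * g.flat l 3 - g.flat a 3 * g.flat l 2)⁻¹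

/-- The 2-form `F = (u·κ) α ∧ l♭` (with `α = a♭`). -/
def frameF (g : Lorentzian) (a l : Vec) (u : Sc) : Form2 := fun μ ν =>
  u * kappa g a l * (g.flat a μ * g.flat l ν - g.flat a ν * g.flat l μ)

end FFE

/-- The 1-form `α = −(g³³)^{−1/2} dx³` (coordinate `x³` has index `2`). -/
def FFE.alphaM (g : FFE.Lorentzian) : FFE.Cov := fun μ => fun p =>
  if μ = 2 then -1 / Real.sqrt (g.ginv 2 2 p) else 0

/-!
With `G = g³³`, the choice `α = −G^{−1/2} dx³` makes `α₃ M♭₄ = G^{1/2}` because `M♭ = g³⁴dx³ − G dx⁴`,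
so `κ = G^{−1/2} = −α₃`. Since `α` is a multiple of the closed form `dx³` and `M³ = 0`, one gets
`dα(M, α♯) = M(α₃) · (α♯)³ = M(α₃) · G α₃`, while `M(ln|κ|) = M(α₃) / α₃`; the two agree because
`G α₃² = 1`.
-/

namespace FFE

lemma pd_neg (i : Fin 4) (f : Sc) : pd i (-f) = -pd i f := by
  funext p
  simp only [pd, fderiv_neg, Pi.neg_apply, neg_apply]

lemma pd_zero (i : Fin 4) : pd i (0 : Sc) = 0 := by
  funext p
  simp [pd]

lemma pd_logabs {f : Sc} {p : Pt} (hf : DifferentiableAt ℝ f p) (hp : f p ≠ 0) (i : Fin 4) :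
    pd i (logabs f) p = pd i f p / f p := by
  have hlog : logabs f = fun q => Real.log (f q) := by
    funext q
    exact Real.log_abs (f q)
  rw [pd, hlog, (hf.hasFDerivAt.log hp).fderiv, smul_apply, smul_eq_mul,
    inv_mul_eq_div, pd]

lemma act_neg (v : Vec) (f : Sc) : act v (-f) = -act v f := by
  simp only [act, pd_neg, mul_neg, Finset.sum_neg_distrib]

lemma act_logabs {f : Sc} (hf : Differentiable ℝ f) (hf0 : ∀ p, f p ≠ 0) (v : Vec) :
    act v (logabs f) = act v f / f := by
  funext p
  simp only [act, Finset.sum_apply, Pi.mul_apply, Pi.div_apply, Finset.sum_div,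
    pd_logabs (hf p) (hf0 p), mul_div_assoc]

lemma pd_single (i k ν : Fin 4) (f : Sc) :
    pd i ((Pi.single k f : Cov) ν) = (Pi.single k (pd i f) : Cov) ν := by
  by_cases hν : ν = k
  · subst hν
    simp
  · simp [hν, pd_zero]

lemma dOne_single (k : Fin 4) (f : Sc) (v w : Vec) :
    dOne (Pi.single k f) v w = act v f * w k - v k * act w f := by
  simp only [dOne, act, pd_single, sub_mul, Finset.sum_sub_distrib, Finset.mul_sum,
    Finset.sum_mul]
  simp only [Pi.single_apply, ite_mul, zero_mul, Finset.sum_ite_eq', Finset.sum_ite_irrel,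
    Finset.sum_const_zero, Finset.mem_univ, if_true]
  congr 1 <;> exact Finset.sum_congr rfl fun i _ => by ring

namespace Lorentzian

variable (g : Lorentzian)

lemma sharp_single (k : Fin 4) (f : Sc) (μ : Fin 4) :
    g.sharp (Pi.single k f) μ = g.ginv μ k * f := by
  simp [sharp, Pi.single_apply]

lemma gdown_mul_ginv_sum (μ ρ : Fin 4) (p : Pt) :
    (∑ ν, g.gdown μ ν p * g.ginv ν ρ p) = if μ = ρ then 1 else 0 := by
  simp_rw [g.symm_gdown μ, g.symm_ginv _ ρ, mul_comm (g.gdown _ μ p)]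
  rw [g.inv_gdown ρ μ p]
  simp only [eq_comm]

lemma flat_sharp (ω : Cov) : g.flat (g.sharp ω) = ω := by
  funext μ p
  simp only [Lorentzian.flat, Lorentzian.sharp, Finset.sum_apply, Pi.mul_apply, Finset.mul_sum]
  rw [Finset.sum_comm]
  simp_rw [← mul_assoc, ← Finset.sum_mul, g.gdown_mul_ginv_sum, ite_mul, one_mul, zero_mul,
    Finset.sum_ite_eq, Finset.mem_univ, if_true]

end Lorentzian

lemma Mvec_eq_sharp (g : Lorentzian) :
    Mvec g = g.sharp (Pi.single 2 (g.ginv 2 3) - Pi.single 3 (g.ginv 2 2)) := by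
  funext r
  simp only [Mvec, Lorentzian.sharp, Pi.sub_apply, mul_sub, Finset.sum_sub_distrib]
  simp [Pi.single_apply, mul_comm]

lemma Mvec_two (g : Lorentzian) : Mvec g 2 = 0 := by
  simp only [Mvec]
  ring

lemma alphaM_eq_single (g : Lorentzian) :
    alphaM g = Pi.single 2 (-fun p => 1 / √(g.ginv 2 2 p)) := by
  funext μ p
  by_cases hμ : μ = 2
  · subst hμ
    simp [alphaM, neg_div]
  · simp [alphaM, hμ]

lemma alphaM_wedge_flat_Mvec_inv (g : Lorentzian) :
    (alphaM g 2 * g.flat (Mvec g) 3 - alphaM g 3 * g.flat (Mvec g) 2)⁻¹ =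
      fun p => 1 / √(g.ginv 2 2 p) := by
  rw [Mvec_eq_sharp, g.flat_sharp, alphaM_eq_single]
  funext p
  simp [inv_mul_eq_div]

lemma differentiable_one_div_sqrt_ginv (g : Lorentzian) (hg33 : ∀ p, 0 < g.ginv 2 2 p) :
    Differentiable ℝ fun p => 1 / √(g.ginv 2 2 p) := by
  intro p
  have hG := (g.smooth_ginv 2 2).differentiable (by simp) p
  simp only [one_div]
  exact (hG.sqrt (hg33 p).ne').inv (Real.sqrt_pos.mpr (hg33 p)).ne'

lemma act_Mvec_logabs_eq_dOne_alphaM (g : Lorentzian) (hg33 : ∀ p, 0 < g.ginv 2 2 p) :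
    act (Mvec g) (logabs fun p => 1 / √(g.ginv 2 2 p)) =
      dOne (alphaM g) (Mvec g) (g.sharp (alphaM g)) := by
  have hpos : ∀ p, 0 < 1 / √(g.ginv 2 2 p) := fun p =>
    one_div_pos.mpr (Real.sqrt_pos.mpr (hg33 p))
  rw [alphaM_eq_single, dOne_single, Mvec_two,
    act_logabs (differentiable_one_div_sqrt_ginv g hg33) fun p => (hpos p).ne']
  funext p
  simp only [Pi.div_apply, Pi.mul_apply, Pi.sub_apply, Pi.zero_apply, Pi.neg_apply, act_neg,
    Lorentzian.sharp_single, zero_mul, sub_zero]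
  rw [mul_neg, neg_mul_neg, mul_one_div, Real.div_sqrt, div_div_eq_mul_div, div_one]

end FFE

theorem FFE.kappaM_general (g : Lorentzian)
    (hg33 : ∀ p, 0 < g.ginv 2 2 p)
    (s n : Vec)
    (κ : Sc)
    (hκ : κ = (alphaM g 2 * g.flat (Mvec g) 3 - alphaM g 3 * g.flat (Mvec g) 2)⁻¹) :
    (κ = fun p => 1 / Real.sqrt (g.ginv 2 2 p)) ∧
    act (Mvec g) (logabs κ) = dOne (alphaM g) (Mvec g) (g.sharp (alphaM g)) ∧
    ((dOne (g.flat (Mvec g)) n (Mvec g) +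
        dOne (alphaM g) (Mvec g) (g.sharp (alphaM g)) +
        dOne (g.flat s) (Mvec g) s = 0) ↔
      (act (Mvec g) (logabs κ) + dOne (g.flat (Mvec g)) n (Mvec g) +
        dOne (g.flat s) (Mvec g) s = 0)) := by
  subst hκ
  rw [alphaM_wedge_flat_Mvec_inv g, act_Mvec_logabs_eq_dOne_alphaM g hg33,
    add_comm (dOne (g.flat (Mvec g)) n (Mvec g))]
  exact ⟨rfl, rfl, Iff.rfl⟩

/-- In a null foliation adapted chart with `g³³ ≠ 0` (here
`g³³ > 0`), choose `l = M` and `α = −(g³³)^{−1/2} dx³`, so that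
`κ = (g³³)^{−1/2}`.  Then `M(ln|κ|) = dα(M,α♯)`; consequently
`dM♭(n,M) + dα(M,α♯) + ds♭(M,s) = 0` (equivalently `∇_μ M^μ = 0`) holds iff
`M(ln|κ|) + dM♭(n,M) + ds♭(M,s) = 0`. -/
theorem FFE.kappaM (g : Lorentzian) (hdeg : g.NullAdapted)
    (hg33 : ∀ p, 0 < g.ginv 2 2 p)
    (s n : Vec) (hframe : Frame g s (Mvec g) (g.sharp (alphaM g)) n)
    (hs2 : s 2 = 0) (hs3 : s 3 = 0)
    (κ : Sc)
    (hκ : κ = (alphaM g 2 * g.flat (Mvec g) 3 - alphaM g 3 * g.flat (Mvec g) 2)⁻¹) :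
    (κ = fun p => 1 / Real.sqrt (g.ginv 2 2 p)) ∧
    act (Mvec g) (logabs κ) = dOne (alphaM g) (Mvec g) (g.sharp (alphaM g)) ∧
    ((dOne (g.flat (Mvec g)) n (Mvec g) +
        dOne (alphaM g) (Mvec g) (g.sharp (alphaM g)) +
        dOne (g.flat s) (Mvec g) s = 0) ↔
      (act (Mvec g) (logabs κ) + dOne (g.flat (Mvec g)) n (Mvec g) +
        dOne (g.flat s) (Mvec g) s = 0)) :=
  FFE.kappaM_general g hg33 s n κ hκ
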